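/- arXiv:2407.04950 — 2 statements merged into one kernel-verified Lean document; each statement's English description precedes it below -/
import Mathlib

section
/- (Moon–Moser) Let G be a simple graph on n ≥ 1 vertices with m edges. Then the number of triangles of G satisfies t(G) ≥ (4m/(3n))·(m − n²/4). -/
open Classical in
/-- Adjacency matrix of a simple graph, over `ℝ`. -/
noncomputable def adjMat {V : Type*} [Fintype V] (G : SimpleGraph V) : Matrix V V ℝ :=
  Matrix.of fun i j => if G.Adj i j then 1 else 0

/-- Spectral radius (largest eigenvalue) of a finite simple graph: the supremum of the
real spectrum of its adjacency matrix. -/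
noncomputable def specRad {V : Type*} [Fintype V] [DecidableEq V]
    (G : SimpleGraph V) : ℝ :=
  sSup (spectrum ℝ (adjMat G))

/-- Number of edges of a graph. -/
noncomputable def edgeCount {V : Type*} (G : SimpleGraph V) : ℕ := G.edgeSet.ncard

/-- Number of triangles of a graph. -/
noncomputable def triangleCount {V : Type*} (G : SimpleGraph V) : ℕ :=
  {t : Finset V | G.IsNClique 3 t}.ncard

/-- Triangle covering number: minimum size of a vertex set meeting every triangle. -/
noncomputable def triangleCoverNumber {V : Type*} [Fintype V] [DecidableEq V]
    (G : SimpleGraph V) : ℕ :=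
  sInf {k | ∃ s : Finset V, s.card = k ∧ ∀ t : Finset V, G.IsNClique 3 t → ∃ v ∈ s, v ∈ t}

/-- Number of bowties: unordered pairs of triangles sharing exactly one vertex. -/
noncomputable def bowtieCount {V : Type*} [DecidableEq V] (G : SimpleGraph V) : ℕ :=
  {p : Finset (Finset V) | p.card = 2 ∧ (∀ t ∈ p, G.IsNClique 3 t) ∧
    ∀ t₁ ∈ p, ∀ t₂ ∈ p, t₁ ≠ t₂ → (t₁ ∩ t₂).card = 1}.ncard

/-- Complete bipartite graph on `Fin n` with parts `[0, s)` and `[s, n)`. -/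
def biGraph (n s : ℕ) : SimpleGraph (Fin n) :=
  SimpleGraph.fromRel (fun i j => (i : ℕ) < s ∧ s ≤ (j : ℕ))

/-- `K_{s,t}^{+2}`: complete bipartite with two disjoint extra edges `{0,1}`, `{2,3}`
inside the part `[0, s)`. -/
def biGraphPlus2 (n s : ℕ) : SimpleGraph (Fin n) :=
  SimpleGraph.fromRel (fun i j => ((i : ℕ) < s ∧ s ≤ (j : ℕ)) ∨
    ((i : ℕ) = 0 ∧ (j : ℕ) = 1) ∨ ((i : ℕ) = 2 ∧ (j : ℕ) = 3))

/-- `K_{s,t}^{+}`: complete bipartite with one extra edge `{0,1}` inside the part `[0, s)`. -/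
def biGraphPlus1 (n s : ℕ) : SimpleGraph (Fin n) :=
  SimpleGraph.fromRel (fun i j => ((i : ℕ) < s ∧ s ≤ (j : ℕ)) ∨ ((i : ℕ) = 0 ∧ (j : ℕ) = 1))

/-- `K_{s,t}^{++}`: complete bipartite with one extra edge in each part. -/
def biGraphPlusPlus (n s : ℕ) : SimpleGraph (Fin n) :=
  SimpleGraph.fromRel (fun i j => ((i : ℕ) < s ∧ s ≤ (j : ℕ)) ∨
    ((i : ℕ) = 0 ∧ (j : ℕ) = 1) ∨ ((i : ℕ) = s ∧ (j : ℕ) = s + 1))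

/-- The friendship graph `F_k`: `k` triangles meeting in the common vertex `0`. -/
def friendship (k : ℕ) : SimpleGraph (Fin (2 * k + 1)) :=
  SimpleGraph.fromRel (fun a b => ((a : ℕ) = 0 ∧ (b : ℕ) ≠ 0) ∨
    ((a : ℕ) % 2 = 1 ∧ (b : ℕ) = (a : ℕ) + 1))

/-- `G` contains a copy of `H` (a subgraph isomorphic to `H`). -/
def ContainsCopy {α β : Type*} (H : SimpleGraph α) (G : SimpleGraph β) : Prop :=
  ∃ f : α → β, Function.Injective f ∧ ∀ a b, H.Adj a b → G.Adj (f a) (f b)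

/-- Number of edges of `G` with both endpoints in `S`. -/
noncomputable def eIn {V : Type*} (G : SimpleGraph V) (S : Finset V) : ℕ :=
  {e ∈ G.edgeSet | ∀ v ∈ e, v ∈ S}.ncard

/-- Number of edges of `G` with one endpoint in `S` and the other in `T`. -/
noncomputable def eCross {V : Type*} (G : SimpleGraph V) (S T : Finset V) : ℕ :=
  {e ∈ G.edgeSet | ∃ u ∈ S, ∃ v ∈ T, e = s(u, v)}.ncard

/-- `G` is `ε`-far from being bipartite: every spanning subgraph obtained by removing
fewer than `ε` edges is non-bipartite. -/
def FarFromBipartite {V : Type*} (G : SimpleGraph V) (ε : ℝ) : Prop :=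
  ∀ G' : SimpleGraph V, G' ≤ G → (edgeCount G : ℝ) - ε < (edgeCount G' : ℝ) →
    ¬ G'.Colorable 2

/-! For an edge `uv`, inclusion–exclusion on the two neighbourhoods gives
`d(u) + d(v) ≤ n + #(triangles through uv)`. Summing over the edges, each vertex `v` appears
`d(v)` times on the left and each triangle once for each of its three edges, so
`∑ d(v)² ≤ n m + 3 t`. Together with Cauchy–Schwarz, `(2m)² ≤ n ∑ d(v)²`, this gives
`4 m² ≤ n (n m + 3 t)`, which rearranges to the bound. Edges are taken as 2-cliques, so that
the triangles through an edge are its supersets among the 3-cliques. -/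

namespace SimpleGraph

open Finset

theorem Adj.isNClique_two {V : Type*} [DecidableEq V] {G : SimpleGraph V} {u v : V}
    (huv : G.Adj u v) : G.IsNClique 2 {u, v} :=
  ⟨by rw [coe_pair]; exact isClique_pair.2 fun _ => huv, card_pair huv.ne⟩

variable {V : Type*} [Fintype V] [DecidableEq V] (G : SimpleGraph V) [DecidableRel G.Adj]

theorem sum_card_supersets_in_cliqueFinset_succ (k : ℕ) :
    ∑ s ∈ G.cliqueFinset k, #{t ∈ G.cliqueFinset (k + 1) | s ⊆ t}
      = (k + 1) * #(G.cliqueFinset (k + 1)) := by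
  have hbelow : ∀ t ∈ G.cliqueFinset (k + 1),
      #((G.cliqueFinset k).bipartiteBelow (· ⊆ ·) t) = k + 1 := by
    intro t ht
    have ht := mem_cliqueFinset_iff.1 ht
    have hsub : (G.cliqueFinset k).bipartiteBelow (· ⊆ ·) t = t.powersetCard k := by
      ext s
      simp only [mem_bipartiteBelow, mem_cliqueFinset_iff, mem_powersetCard]
      exact ⟨fun ⟨hs, hst⟩ => ⟨hst, hs.card_eq⟩,
        fun ⟨hst, hs⟩ => ⟨⟨ht.isClique.subset hst, hs⟩, hst⟩⟩
    rw [hsub, card_powersetCard, ht.card_eq, Nat.choose_succ_self_right]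
  calc ∑ s ∈ G.cliqueFinset k, #{t ∈ G.cliqueFinset (k + 1) | s ⊆ t}
      = ∑ t ∈ G.cliqueFinset (k + 1), #((G.cliqueFinset k).bipartiteBelow (· ⊆ ·) t) :=
        sum_card_bipartiteAbove_eq_sum_card_bipartiteBelow _
    _ = (k + 1) * #(G.cliqueFinset (k + 1)) := by
        rw [sum_congr rfl hbelow, sum_const, smul_eq_mul, mul_comm]

theorem card_cliqueFinset_two_filter_mem (v : V) :
    #{e ∈ G.cliqueFinset 2 | v ∈ e} = G.degree v := by
  rw [← card_neighborFinset_eq_degree]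
  symm
  refine card_bij (fun w _ => {v, w}) (fun w hw => ?_) (fun w hw w' hw' h => ?_) (fun e he => ?_)
  · simp only [mem_filter, mem_cliqueFinset_iff, mem_insert, true_or, and_true]
    exact ((mem_neighborFinset G v w).1 hw).isNClique_two
  · have hvw := ((mem_neighborFinset G v w).1 hw).ne
    have hw_mem : w ∈ ({v, w'} : Finset V) := h ▸ mem_insert_of_mem (mem_singleton_self w)
    rcases mem_insert.1 hw_mem with rfl | hw_mem
    · exact absurd rfl hvw
    · exact mem_singleton.1 hw_mem
  · obtain ⟨he, hve⟩ := mem_filter.1 he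
    have he := mem_cliqueFinset_iff.1 he
    obtain ⟨a, b, hab, rfl⟩ := card_eq_two.1 he.card_eq
    have hadj : G.Adj a b := he.isClique (by simp) (by simp) hab
    rcases mem_insert.1 hve with rfl | hve
    · exact ⟨b, (mem_neighborFinset G _ _).2 hadj, rfl⟩
    rw [mem_singleton.1 hve]
    exact ⟨a, (mem_neighborFinset G _ _).2 hadj.symm, pair_comm _ _⟩

theorem sum_cliqueFinset_two_sum_mem {M : Type*} [AddCommMonoid M] (f : V → M) :
    ∑ e ∈ G.cliqueFinset 2, ∑ v ∈ e, f v = ∑ v, G.degree v • f v := by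
  rw [sum_comm' (t' := univ) (s' := fun v => {e ∈ G.cliqueFinset 2 | v ∈ e})
    (fun e v => by simp)]
  simp only [sum_const, card_cliqueFinset_two_filter_mem]

theorem card_neighborFinset_inter_le_card_supersets_in_cliqueFinset_three {u v : V}
    (huv : G.Adj u v) :
    #(G.neighborFinset u ∩ G.neighborFinset v) ≤ #{t ∈ G.cliqueFinset 3 | {u, v} ⊆ t} := by
  refine card_le_card_of_injOn (fun w => {u, v, w}) (fun w hw => ?_) (fun w hw w' hw' h => ?_)
  · simp only [coe_inter, Set.mem_inter_iff, mem_coe, mem_neighborFinset] at hw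
    simp only [coe_filter, mem_cliqueFinset_iff, Set.mem_ofPred_eq, is3Clique_triple_iff]
    exact ⟨⟨huv, hw.1, hw.2⟩,
      insert_subset_insert u (singleton_subset_iff.2 (mem_insert_self v _))⟩
  · simp only [coe_inter, Set.mem_inter_iff, mem_coe, mem_neighborFinset] at hw
    have hw_mem : w ∈ ({u, v, w'} : Finset V) := by
      rw [← show ({u, v, w} : Finset V) = {u, v, w'} from h]; simp
    simp only [mem_insert, mem_singleton] at hw_mem
    rcases hw_mem with rfl | rfl | rfl
    · exact absurd hw.1 G.irrefl
    · exact absurd hw.2 G.irrefl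
    · rfl

theorem degree_add_degree_le (u v : V) :
    G.degree u + G.degree v ≤ Fintype.card V + #(G.neighborFinset u ∩ G.neighborFinset v) := by
  rw [← card_neighborFinset_eq_degree, ← card_neighborFinset_eq_degree,
    ← card_union_add_card_inter]
  exact Nat.add_le_add_right (card_le_univ _) _

theorem card_cliqueFinset_two : #(G.cliqueFinset 2) = #G.edgeFinset := by
  have h := G.sum_cliqueFinset_two_sum_mem fun _ => 1
  simp only [sum_const, smul_eq_mul, mul_one, sum_degrees_eq_twice_card_edges] at h
  rw [sum_congr rfl fun e he => (mem_cliqueFinset_iff.1 he).card_eq, sum_const,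
    smul_eq_mul] at h
  omega

theorem sum_degree_le_of_mem_cliqueFinset_two {e : Finset V} (he : e ∈ G.cliqueFinset 2) :
    ∑ v ∈ e, G.degree v ≤ Fintype.card V + #{t ∈ G.cliqueFinset 3 | e ⊆ t} := by
  have he := mem_cliqueFinset_iff.1 he
  obtain ⟨u, v, huv, rfl⟩ := card_eq_two.1 he.card_eq
  rw [sum_pair huv]
  exact (G.degree_add_degree_le u v).trans <| Nat.add_le_add_left
    (G.card_neighborFinset_inter_le_card_supersets_in_cliqueFinset_three
      (he.isClique (by simp) (by simp) huv)) _

theorem sum_degree_sq_le :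
    ∑ v, G.degree v ^ 2 ≤ Fintype.card V * #G.edgeFinset + 3 * #(G.cliqueFinset 3) :=
  calc ∑ v, G.degree v ^ 2 = ∑ e ∈ G.cliqueFinset 2, ∑ v ∈ e, G.degree v := by
        simp only [sum_cliqueFinset_two_sum_mem, smul_eq_mul, sq]
    _ ≤ ∑ e ∈ G.cliqueFinset 2, (Fintype.card V + #{t ∈ G.cliqueFinset 3 | e ⊆ t}) :=
        sum_le_sum fun _ he => G.sum_degree_le_of_mem_cliqueFinset_two he
    _ = Fintype.card V * #G.edgeFinset + 3 * #(G.cliqueFinset 3) := by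
        rw [sum_add_distrib, sum_const, smul_eq_mul, card_cliqueFinset_two, mul_comm,
          sum_card_supersets_in_cliqueFinset_succ]

theorem four_mul_sq_card_edgeFinset_le :
    4 * #G.edgeFinset ^ 2 ≤
      Fintype.card V * (Fintype.card V * #G.edgeFinset + 3 * #(G.cliqueFinset 3)) :=
  calc 4 * #G.edgeFinset ^ 2 = (∑ v, G.degree v) ^ 2 := by
        rw [sum_degrees_eq_twice_card_edges]; ring
    _ ≤ Fintype.card V * ∑ v, G.degree v ^ 2 := sq_sum_le_card_mul_sum_sq
    _ ≤ _ := Nat.mul_le_mul_left _ G.sum_degree_sq_le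

end SimpleGraph

theorem edgeCount_eq_card_edgeFinset {V : Type*} [Fintype V] (G : SimpleGraph V)
    [DecidableRel G.Adj] : edgeCount G = G.edgeFinset.card := by
  rw [edgeCount, ← SimpleGraph.coe_edgeFinset, Set.ncard_coe_finset]

theorem triangleCount_eq_card_cliqueFinset {V : Type*} [Fintype V] [DecidableEq V]
    (G : SimpleGraph V) [DecidableRel G.Adj] :
    triangleCount G = (G.cliqueFinset 3).card := by
  change (G.cliqueSet 3).ncard = _
  rw [← SimpleGraph.coe_cliqueFinset, Set.ncard_coe_finset]

/-- **Moon–Moser.** For a graph on `n ≥ 1` vertices with `m` edges,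
`t(G) ≥ (4m/(3n))·(m − n²/4)`. -/
theorem stmt_9 (n : ℕ) (hn : 1 ≤ n) (G : SimpleGraph (Fin n)) :
    4 * (edgeCount G : ℝ) / (3 * n) * ((edgeCount G : ℝ) - (n : ℝ) ^ 2 / 4) ≤
      (triangleCount G : ℝ) := by
  classical
  have key : (4 * edgeCount G ^ 2 : ℝ) ≤ n * (n * edgeCount G + 3 * triangleCount G) := by
    rw [edgeCount_eq_card_edgeFinset, triangleCount_eq_card_cliqueFinset]
    exact_mod_cast Fintype.card_fin n ▸ G.four_mul_sq_card_edgeFinset_le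
  have hn_pos : (0 : ℝ) < n := by exact_mod_cast hn
  rw [div_mul_eq_mul_div, div_le_iff₀ (by positivity)]
  linarith
end

section
/- (Alon–Shikhelman) Let k ≥ 2 and let G be a simple graph on n vertices that contains no copy of the friendship graph F_k. Then the number of triangles of G satisfies t(G) < (9k − 15)(k + 1)n. -/
/-!
Call an edge heavy if it lies in at least `2k - 1` triangles. In an `F_k`-free graph every vertex
is on at most `k - 1` heavy edges: from `k` heavy edges `c u_i` one can pick, by Hall's theorem,
distinct common neighbours `a_i` of `c` and `u_i` outside `{u_j}`, and the triangles `c u_i a_i`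
form an `F_k`. Moreover the triangles through a vertex `w` are met by at most `2(k - 1)` vertices
other than `w`: those of a maximal family of triangles through `w` pairwise meeting only in `w`,
which has fewer than `k` members.

Charging each triangle with a heavy edge to the vertex opposite to it, the transversal at that
vertex and the heavy-degree bound give at most `2(k - 1)(k - 1)` such triangles per vertex. The
transversal at `w` together with the light codegrees gives at most `2(k - 1) · 2(k - 1)` triangles
without heavy edges through `w`. Hence `3 t(G) ≤ 10 (k - 1)^2 n`.
-/

open Finset

namespace Finset

theorem exists_injective_forall_mem {ι α : Type*} [Fintype ι] [DecidableEq α]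
    (t : ι → Finset α) (ht : ∀ i, Fintype.card ι ≤ #(t i)) :
    ∃ f : ι → α, Function.Injective f ∧ ∀ i, f i ∈ t i := by
  rw [← all_card_le_biUnion_card_iff_exists_injective]
  intro s
  obtain rfl | ⟨i, hi⟩ := s.eq_empty_or_nonempty
  · simp
  · exact s.card_le_univ.trans <| (ht i).trans <| card_le_card <| subset_biUnion_of_mem t hi

theorem eq_of_card_eq_three {α : Type*} [DecidableEq α] {s : Finset α} {x y z : α}
    (hs : #s = 3) (hx : x ∈ s) (hy : y ∈ s) (hz : z ∈ s) (hxy : x ≠ y) (hxz : x ≠ z)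
    (hyz : y ≠ z) : s = {x, y, z} :=
  (eq_of_subset_of_card_le (by simp [insert_subset_iff, *])
    (by rw [hs, card_eq_three.2 ⟨x, y, z, hxy, hxz, hyz, rfl⟩])).symm

theorem exists_mem_ne_ne_of_card_eq_three {α : Type*} [DecidableEq α] {s : Finset α}
    (hs : #s = 3) (x y : α) : ∃ z ∈ s, z ≠ x ∧ z ≠ y := by
  by_contra! h
  have : s ⊆ {x, y} := fun z hz => by have := h z hz; simp; tauto
  have := (card_le_card this).trans card_le_two
  omega

end Finset

namespace SimpleGraph

section Friendship

variable {V : Type*} {k : ℕ}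

-- The triangle `{0, 2i+1, 2i+2}` of `F_k` is sent to `{w, a i, b i}`.
def friendshipMap (w : V) (a b : Fin k → V) (x : Fin (2 * k + 1)) : V :=
  if h : x.val = 0 then w
  else if h' : x.val % 2 = 1 then a ⟨x.val / 2, by omega⟩ else b ⟨x.val / 2 - 1, by omega⟩

theorem containsCopy_friendship_of_pairs {G : SimpleGraph V} {w : V} {a b : Fin k → V}
    (hwa : ∀ i, G.Adj w (a i)) (hwb : ∀ i, G.Adj w (b i)) (hab : ∀ i, G.Adj (a i) (b i))
    (hinj : Function.Injective (Sum.elim a b)) : ContainsCopy (friendship k) G := by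
  have ha : ∀ {i j}, a i = a j → i.val = j.val := fun h => by
    simpa [Fin.ext_iff] using hinj (a₁ := .inl _) (a₂ := .inl _) h
  have hb : ∀ {i j}, b i = b j → i.val = j.val := fun h => by
    simpa [Fin.ext_iff] using hinj (a₁ := .inr _) (a₂ := .inr _) h
  have hab' : ∀ {i j}, a i ≠ b j := fun h => by
    simpa using hinj (a₁ := .inl _) (a₂ := .inr _) h
  refine ⟨friendshipMap w a b, fun x y hxy => ?_, fun x y hxy => ?_⟩
  · unfold friendshipMap at hxy
    split_ifs at hxy
    all_goals first
      | exact Fin.ext (by omega)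
      | exact absurd hxy (hwa _).ne | exact absurd hxy (hwb _).ne
      | exact absurd hxy.symm (hwa _).ne | exact absurd hxy.symm (hwb _).ne
      | exact absurd hxy hab' | exact absurd hxy.symm hab'
      | have := ha hxy; simp at this; exact Fin.ext (by omega)
      | have := hb hxy; simp at this; exact Fin.ext (by omega)
  · simp only [friendship, fromRel_adj] at hxy
    unfold friendshipMap
    split_ifs
    all_goals first
      | omega
      | exact hwa _ | exact hwb _ | exact (hwa _).symm | exact (hwb _).symm
      | convert hab _ using 3; omega
      | convert (hab _).symm using 3; omega

theorem containsCopy_friendship_of_triangles [DecidableEq V] {G : SimpleGraph V} {w : V}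
    {T : Fin k → Finset V} (hT : ∀ i, G.IsNClique 3 (T i)) (hw : ∀ i, w ∈ T i)
    (hdisj : Pairwise fun i j => Disjoint ((T i).erase w) ((T j).erase w)) :
    ContainsCopy (friendship k) G := by
  have hpair i : ∃ a b, a ≠ b ∧ (T i).erase w = {a, b} := by
    rw [← card_eq_two, card_erase_of_mem (hw i), (hT i).card_eq]
  choose a b hab heq using hpair
  have ha i : a i ∈ (T i).erase w := by simp [heq]
  have hb i : b i ∈ (T i).erase w := by simp [heq]
  have hadj {i x y} (hx : x ∈ T i) (hy : y ∈ T i) (hxy : x ≠ y) : G.Adj x y :=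
    (hT i).1 hx hy hxy
  have hdiff {i j x y} (hx : x ∈ (T i).erase w) (hy : y ∈ (T j).erase w) (hxy : x = y) :
      i = j := by
    by_contra hij
    exact Finset.disjoint_left.1 (hdisj hij) hx (by rwa [hxy])
  refine containsCopy_friendship_of_pairs
    (fun i => hadj (hw i) (mem_of_mem_erase (ha i)) (ne_of_mem_erase (ha i)).symm)
    (fun i => hadj (hw i) (mem_of_mem_erase (hb i)) (ne_of_mem_erase (hb i)).symm)
    (fun i => hadj (mem_of_mem_erase (ha i)) (mem_of_mem_erase (hb i)) (hab i))
    (Function.Injective.sumElim (fun i j h => hdiff (ha i) (ha j) h)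
      (fun i j h => hdiff (hb i) (hb j) h)
      fun i j h => by obtain rfl := hdiff (ha i) (hb j) h; exact hab i h)

end Friendship

variable {V : Type*} [Fintype V] [DecidableEq V] {G : SimpleGraph V} [DecidableRel G.Adj] {k : ℕ}

variable (G k) in
def IsHeavy (u v : V) : Prop :=
  G.Adj u v ∧ 2 * k - 1 ≤ #(G.neighborFinset u ∩ G.neighborFinset v)

instance : DecidableRel (G.IsHeavy k) := fun _ _ => inferInstanceAs (Decidable (_ ∧ _))

theorem IsHeavy.symm {u v : V} (h : G.IsHeavy k u v) : G.IsHeavy k v u :=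
  ⟨h.1.symm, inter_comm (G.neighborFinset u) _ ▸ h.2⟩

theorem card_isHeavy_le (hfree : ¬ ContainsCopy (friendship k) G) (c : V) :
    #{u | G.IsHeavy k c u} ≤ k - 1 := by
  by_contra! h
  obtain ⟨u, hu_inj, hu⟩ := exists_injective_forall_mem (fun _ : Fin k => {u | G.IsHeavy k c u})
    (by simp only [Fintype.card_fin]; omega)
  simp only [mem_filter_univ] at hu
  have hcard i :
      Fintype.card (Fin k) ≤ #((G.neighborFinset c ∩ G.neighborFinset (u i)) \ univ.image u) := by
    -- `u i` is not a neighbour of itself, so at most `k - 1` of the `u j` are common neighbours.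
    have hU : (G.neighborFinset c ∩ G.neighborFinset (u i)) ∩ univ.image u ⊆
        (univ.image u).erase (u i) := fun x hx => by
      simp only [mem_inter, mem_neighborFinset] at hx
      exact mem_erase.2 ⟨hx.1.2.ne', hx.2⟩
    have h1 := card_le_card hU
    rw [card_erase_of_mem (mem_image_of_mem u (mem_univ i))] at h1
    have h2 :=
      card_sdiff_add_card_inter (G.neighborFinset c ∩ G.neighborFinset (u i)) (univ.image u)
    have h3 : #(univ.image u) ≤ k := card_image_le.trans (by simp)
    have h4 := (hu i).2
    simp only [Fintype.card_fin]
    omega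
  obtain ⟨a, ha_inj, ha⟩ := exists_injective_forall_mem _ hcard
  simp only [mem_sdiff, mem_inter, mem_neighborFinset, mem_image, mem_univ, true_and] at ha
  exact hfree <| containsCopy_friendship_of_pairs (fun i => (hu i).1) (fun i => (ha i).1.1)
    (fun i => (ha i).1.2) (hu_inj.sumElim ha_inj fun i j h => (ha j).2 ⟨i, h⟩)

theorem card_le_of_pairwiseDisjoint_erase (hfree : ¬ ContainsCopy (friendship k) G) {w : V}
    {M : Finset (Finset V)} (hM : ∀ T ∈ M, T ∈ G.cliqueFinset 3 ∧ w ∈ T)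
    (hdisj : (M : Set (Finset V)).PairwiseDisjoint (·.erase w)) : #M ≤ k - 1 := by
  by_contra! h
  obtain ⟨T, hT_inj, hT⟩ := exists_injective_forall_mem (fun _ : Fin k => M)
    (by simp only [Fintype.card_fin]; omega)
  exact hfree <| containsCopy_friendship_of_triangles
    (fun i => mem_cliqueFinset_iff.1 (hM _ (hT i)).1)
    (fun i => (hM _ (hT i)).2) fun i j hij => hdisj (hT i) (hT j) (hT_inj.ne hij)

theorem exists_small_triangle_transversal (hfree : ¬ ContainsCopy (friendship k) G) (w : V) :
    ∃ C : Finset V, w ∉ C ∧ #C ≤ 2 * (k - 1) ∧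
      ∀ T ∈ G.cliqueFinset 3, w ∈ T → ∃ c ∈ C, c ∈ T := by
  classical
  obtain ⟨M, hM, hmax⟩ := exists_max_image
    ({T ∈ G.cliqueFinset 3 | w ∈ T}.powerset.filter fun M : Finset (Finset V) =>
      (M : Set (Finset V)).PairwiseDisjoint (·.erase w)) card ⟨∅, by simp⟩
  simp only [mem_filter, mem_powerset, subset_iff] at hM
  have hcard T (hT : T ∈ G.cliqueFinset 3) (hwT : w ∈ T) : #(T.erase w) = 2 := by
    rw [card_erase_of_mem hwT, (mem_cliqueFinset_iff.1 hT).card_eq]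
  refine ⟨M.biUnion (·.erase w), by simp, ?_, fun T hT hwT => ?_⟩
  · have := card_le_of_pairwiseDisjoint_erase hfree hM.1 hM.2
    have := card_biUnion_le_card_mul M (·.erase w) 2 fun T hT =>
      (hcard _ (hM.1 hT).1 (hM.1 hT).2).le
    omega
  by_contra! hno
  have hdisjT T' (hT' : T' ∈ M) : Disjoint (T.erase w) (T'.erase w) := Finset.disjoint_left.2
    fun x hx hx' => hno x (mem_biUnion.2 ⟨T', hT', hx'⟩) (mem_of_mem_erase hx)
  have hTM : T ∉ M := fun hTM => by
    have := hcard T hT hwT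
    rw [(Finset.disjoint_self_iff_empty _).1 (hdisjT T hTM)] at this
    simp at this
  have := hmax (insert T M) <| mem_filter.2
    ⟨mem_powerset.2 <| insert_subset (mem_filter.2 ⟨hT, hwT⟩) fun T' hT' => mem_filter.2 (hM.1 hT'),
      by rw [coe_insert]; exact hM.2.insert fun T' hT' _ => hdisjT T' hT'⟩
  rw [card_insert_of_notMem hTM] at this
  omega

variable (G k) in
def HasHeavyEdge (s : Finset V) : Prop := ∃ u ∈ s, ∃ v ∈ s, G.IsHeavy k u v

instance : DecidablePred (G.HasHeavyEdge k) :=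
  fun _ => inferInstanceAs (Decidable (∃ _ ∈ _, _))

theorem card_filter_mem_mem_le {u v : V} (huv : u ≠ v) :
    #{T ∈ G.cliqueFinset 3 | u ∈ T ∧ v ∈ T} ≤ #(G.neighborFinset u ∩ G.neighborFinset v) := by
  refine (card_le_card fun T hT => ?_).trans (card_image_le (f := fun x => {u, v, x}))
  simp only [mem_filter, mem_cliqueFinset_iff] at hT
  obtain ⟨hT, hu, hv⟩ := hT
  obtain ⟨x, hx, hxu, hxv⟩ := exists_mem_ne_ne_of_card_eq_three hT.card_eq u v
  exact mem_image.2 ⟨x, by simp [hT.1 hu hx hxu.symm, hT.1 hv hx hxv.symm],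
    (eq_of_card_eq_three hT.card_eq hu hv hx huv hxu.symm hxv.symm).symm⟩

theorem card_le_two_mul_of_card_filter_mem_le (hfree : ¬ ContainsCopy (friendship k) G) {w : V}
    {S : Finset (Finset V)} (hS : ∀ T ∈ S, T ∈ G.cliqueFinset 3 ∧ w ∈ T) {m : ℕ}
    (hm : ∀ c ≠ w, #{T ∈ S | c ∈ T} ≤ m) : #S ≤ 2 * (k - 1) * m := by
  obtain ⟨C, hwC, hC, hcover⟩ := exists_small_triangle_transversal hfree w
  have := card_nsmul_le_card_nsmul (r := fun T c => c ∈ T) (m := 1) (n := m) (s := S) (t := C)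
    (fun T hT => by
      obtain ⟨c, hc, hcT⟩ := hcover T (hS T hT).1 (hS T hT).2
      exact card_pos.2 ⟨c, mem_filter.2 ⟨hc, hcT⟩⟩)
    (fun c hc => hm c fun h => hwC (h ▸ hc))
  simp only [smul_eq_mul, mul_one] at this
  exact this.trans (Nat.mul_le_mul_right _ hC)

theorem card_filter_mem_hasHeavyEdge_erase_le (hfree : ¬ ContainsCopy (friendship k) G) (x : V) :
    #{T ∈ G.cliqueFinset 3 | x ∈ T ∧ G.HasHeavyEdge k (T.erase x)} ≤ 2 * (k - 1) * (k - 1) := by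
  refine card_le_two_mul_of_card_filter_mem_le hfree (w := x) (fun T hT => ?_) fun c hcx => ?_
  · exact ⟨(mem_filter.1 hT).1, (mem_filter.1 hT).2.1⟩
  refine (card_le_card fun T hT => ?_).trans (card_image_le (f := fun y => {x, c, y}))
    |>.trans (card_isHeavy_le hfree c)
  simp only [mem_filter, mem_cliqueFinset_iff] at hT
  obtain ⟨⟨hT, hxT, u, hu, v, hv, huv⟩, hcT⟩ := hT
  rw [mem_erase] at hu hv
  rw [eq_of_card_eq_three hT.card_eq hxT hu.2 hv.2 hu.1.symm hv.1.symm huv.1.ne] at hcT ⊢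
  simp only [mem_insert, mem_singleton, hcx, false_or] at hcT
  obtain rfl | rfl := hcT
  · exact mem_image.2 ⟨v, by simpa using huv, rfl⟩
  · exact mem_image.2 ⟨u, by simpa using huv.symm, by rw [pair_comm]⟩

theorem card_filter_not_hasHeavyEdge_mem_le (hfree : ¬ ContainsCopy (friendship k) G) (w : V) :
    #{T ∈ G.cliqueFinset 3 | ¬ G.HasHeavyEdge k T ∧ w ∈ T} ≤ 2 * (k - 1) * (2 * (k - 1)) := by
  refine card_le_two_mul_of_card_filter_mem_le hfree (w := w) (fun T hT => ?_) fun c hcw => ?_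
  · exact ⟨(mem_filter.1 hT).1, (mem_filter.1 hT).2.2⟩
  obtain hempty | ⟨T, hT⟩ := eq_empty_or_nonempty
    {T ∈ {T ∈ G.cliqueFinset 3 | ¬ G.HasHeavyEdge k T ∧ w ∈ T} | c ∈ T}
  · simp [hempty]
  simp only [mem_filter] at hT
  obtain ⟨⟨hT, hlight, hwT⟩, hcT⟩ := hT
  have hadj := (mem_cliqueFinset_iff.1 hT).1 hwT hcT hcw.symm
  have hcodeg : ¬ 2 * k - 1 ≤ #(G.neighborFinset w ∩ G.neighborFinset c) :=
    fun h => hlight ⟨w, hwT, c, hcT, hadj, h⟩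
  refine (card_le_card fun T hT => ?_).trans
    ((card_filter_mem_mem_le (G := G) hcw.symm).trans (by omega))
  simp only [mem_filter] at hT ⊢
  exact ⟨hT.1.1, hT.1.2.2, hT.2⟩

theorem three_mul_card_cliqueFinset_three_le (hfree : ¬ ContainsCopy (friendship k) G) :
    3 * #(G.cliqueFinset 3) ≤ 10 * (k - 1) ^ 2 * Fintype.card V := by
  have hsplit := card_filter_add_card_filter_not (s := G.cliqueFinset 3) (G.HasHeavyEdge k)
  have hheavy := card_nsmul_le_card_nsmul (s := {T ∈ G.cliqueFinset 3 | G.HasHeavyEdge k T})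
    (t := univ) (r := fun T x => x ∈ T ∧ G.HasHeavyEdge k (T.erase x)) (m := 1)
    (fun T hT => by
      obtain ⟨hT, u, hu, v, hv, huv⟩ := mem_filter.1 hT
      obtain ⟨x, hx, hxu, hxv⟩ :=
        exists_mem_ne_ne_of_card_eq_three (mem_cliqueFinset_iff.1 hT).card_eq u v
      exact card_pos.2 ⟨x, by simpa [bipartiteAbove] using
        ⟨hx, u, mem_erase.2 ⟨hxu.symm, hu⟩, v, mem_erase.2 ⟨hxv.symm, hv⟩, huv⟩⟩)
    (fun x _ => (card_le_card fun T hT => by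
      simp only [bipartiteBelow, mem_filter] at hT ⊢; tauto).trans
        (card_filter_mem_hasHeavyEdge_erase_le hfree x))
  have hlight := card_nsmul_le_card_nsmul (s := {T ∈ G.cliqueFinset 3 | ¬ G.HasHeavyEdge k T})
    (t := univ) (r := fun T w => w ∈ T) (m := 3)
    (fun T hT => by
      simp [bipartiteAbove, (mem_cliqueFinset_iff.1 (mem_filter.1 hT).1).card_eq])
    (fun w _ => (card_le_card fun T hT => by
      simp only [bipartiteBelow, mem_filter] at hT ⊢; tauto).trans
        (card_filter_not_hasHeavyEdge_mem_le hfree w))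
  simp only [smul_eq_mul, mul_one, card_univ] at hheavy hlight
  linarith

variable (G) in
theorem triangleCount_eq_card_cliqueFinset : triangleCount G = #(G.cliqueFinset 3) := by
  rw [triangleCount, ← Set.ncard_coe_finset, coe_cliqueFinset]
  rfl

end SimpleGraph

/-- **Alon–Shikhelman.** If `k ≥ 2` and `G` is an `F_k`-free graph on `n ≥ 1`
vertices, then `t(G) < (9k − 15)(k + 1)n`. -/
theorem stmt_12 (k n : ℕ) (hk : 2 ≤ k) (hn : 1 ≤ n) (G : SimpleGraph (Fin n))
    (hfree : ¬ ContainsCopy (friendship k) G) :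
    (triangleCount G : ℝ) < (9 * (k : ℝ) - 15) * ((k : ℝ) + 1) * (n : ℝ) := by
  classical
  have hbound := G.three_mul_card_cliqueFinset_three_le hfree
  rw [Fintype.card_fin, ← G.triangleCount_eq_card_cliqueFinset] at hbound
  have hboundℝ : 3 * (triangleCount G : ℝ) ≤ 10 * ((k : ℝ) - 1) ^ 2 * n := by
    have := (Nat.cast_le (α := ℝ)).2 hbound
    push_cast [Nat.cast_sub (by omega : 1 ≤ k)] at this
    exact this
  have hkℝ : (2 : ℝ) ≤ k := by exact_mod_cast hk
  have hnℝ : (1 : ℝ) ≤ n := by exact_mod_cast hn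
  nlinarith
end
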